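/- Let g ∈ ℝ^d, θ̂ ∈ ℝ^d, γ > 0, and ℓ̂(θ) = c + gᵀ(θ - θ̂) + (γ/2)(gᵀ(θ - θ̂))². Then for any θ₁, θ₂: ℓ̂(θ₂) ≥ ℓ̂(θ₁) + ∇ℓ̂(θ₁)ᵀ(θ₂ - θ₁) + [γ / (2(1 + γ gᵀ(θ₁ - θ̂))²)]·(∇ℓ̂(θ₁)ᵀ(θ₂ - θ₁))², provided 1 + γ gᵀ(θ₁ - θ̂) ≠ 0. -/

import Mathlib

open Real

/-! The inequality holds with equality. Along the direction `g` the surrogate is the scalar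
quadratic `t ↦ c + t + γ/2 t²` in `t = gᵀ(θ - θ̂)`, so its second-order Taylor expansion at
`a = gᵀ(θ₁ - θ̂)` is exact, with remainder `γ/2 (gᵀ(θ₂ - θ₁))²`. Since
`∇ℓ̂(θ₁)ᵀ(θ₂ - θ₁) = (1 + γa) gᵀ(θ₂ - θ₁)`, dividing its square by `(1 + γa)²` returns this
remainder. -/

lemma quadratic_taylor_exact (γ a b : ℝ) :
    b + γ / 2 * b ^ 2 = a + γ / 2 * a ^ 2 + (1 + γ * a) * (b - a) + γ / 2 * (b - a) ^ 2 := by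
  ring

lemma div_mul_sq_mul_sq_cancel (γ x : ℝ) {s : ℝ} (hs : s ≠ 0) :
    γ / (2 * s ^ 2) * (s * x) ^ 2 = γ / 2 * x ^ 2 := by
  field_simp

lemma inner_smul_sub_eq_mul_sub {E : Type*} [NormedAddCommGroup E] [InnerProductSpace ℝ E]
    (s : ℝ) (g p x y : E) :
    inner ℝ (s • g) (y - x) = s * (inner ℝ g (y - p) - inner ℝ g (x - p)) := by
  rw [real_inner_smul_left, ← inner_sub_right, sub_sub_sub_cancel_right]

theorem surrogate_ddc_general {d : ℕ} (c γ : ℝ)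
    (g θhat : EuclideanSpace ℝ (Fin d)) :
    ∀ θ₁ θ₂ : EuclideanSpace ℝ (Fin d),
      1 + γ * (inner ℝ g (θ₁ - θhat) : ℝ) ≠ 0 →
      c + (inner ℝ g (θ₂ - θhat) : ℝ) + γ / 2 * (inner ℝ g (θ₂ - θhat) : ℝ) ^ 2
        ≥ c + (inner ℝ g (θ₁ - θhat) : ℝ) + γ / 2 * (inner ℝ g (θ₁ - θhat) : ℝ) ^ 2
          + (inner ℝ ((1 + γ * (inner ℝ g (θ₁ - θhat) : ℝ)) • g) (θ₂ - θ₁) : ℝ)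
          + γ / (2 * (1 + γ * (inner ℝ g (θ₁ - θhat) : ℝ)) ^ 2)
            * (inner ℝ ((1 + γ * (inner ℝ g (θ₁ - θhat) : ℝ)) • g) (θ₂ - θ₁) : ℝ) ^ 2 := by
  intro θ₁ θ₂ hs
  rw [inner_smul_sub_eq_mul_sub _ g θhat, div_mul_sq_mul_sq_cancel _ _ hs]
  linarith [quadratic_taylor_exact γ (inner ℝ g (θ₁ - θhat)) (inner ℝ g (θ₂ - θhat))]

/-- Directional derivative condition for the quadratic surrogate
`ℓ̂(θ) = c + gᵀ(θ-θ̂) + (γ/2)(gᵀ(θ-θ̂))²` with gradient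
`∇ℓ̂(θ₁) = (1 + γ gᵀ(θ₁-θ̂)) g`: provided `1 + γ gᵀ(θ₁-θ̂) ≠ 0`,
`ℓ̂(θ₂) ≥ ℓ̂(θ₁) + ∇ℓ̂(θ₁)ᵀ(θ₂-θ₁)
  + (γ / (2(1 + γ gᵀ(θ₁-θ̂))²)) (∇ℓ̂(θ₁)ᵀ(θ₂-θ₁))²`. -/
theorem surrogate_ddc {d : ℕ} (c γ : ℝ) (hγ : 0 < γ)
    (g θhat : EuclideanSpace ℝ (Fin d)) :
    ∀ θ₁ θ₂ : EuclideanSpace ℝ (Fin d),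
      1 + γ * (inner ℝ g (θ₁ - θhat) : ℝ) ≠ 0 →
      c + (inner ℝ g (θ₂ - θhat) : ℝ) + γ / 2 * (inner ℝ g (θ₂ - θhat) : ℝ) ^ 2
        ≥ c + (inner ℝ g (θ₁ - θhat) : ℝ) + γ / 2 * (inner ℝ g (θ₁ - θhat) : ℝ) ^ 2
          + (inner ℝ ((1 + γ * (inner ℝ g (θ₁ - θhat) : ℝ)) • g) (θ₂ - θ₁) : ℝ)
          + γ / (2 * (1 + γ * (inner ℝ g (θ₁ - θhat) : ℝ)) ^ 2)
            * (inner ℝ ((1 + γ * (inner ℝ g (θ₁ - θhat) : ℝ)) • g) (θ₂ - θ₁) : ℝ) ^ 2 :=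
  surrogate_ddc_general c γ g θhat
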